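/- Suppose |c| > 1. Then the topological entropy of the twisted tent map f_c restricted to the filled-in Julia set K(c) is at most log 2 (the topological entropy taken in the sense of Adler–Konheim–McAndrew, equivalently the cover entropy of f_c on the invariant subset K(c)). -/

import Mathlib

set_option synthInstance.maxHeartbeats 400000
set_option maxHeartbeats 1000000


/-- The twisted tent map with folding line `Im z = -1`. -/
noncomputable def ttm (c : ℂ) (z : ℂ) : ℂ :=
  if -1 ≤ (c * z).im then c * z else (starRingEnd ℂ) (c * z) - 2 * Complex.I

/-- The filled-in Julia set: points with bounded forward orbit. -/
def ttmK (c : ℂ) : Set ℂ :=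
  {z : ℂ | Bornology.IsBounded (Set.range fun n : ℕ => (ttm c)^[n] z)}

open Set Dynamics Uniformity UniformSpace ENNReal EReal Filter

/-- Lower bound for the modulus of the image. -/
lemma ttm_abs_ge (c z : ℂ) : ‖c‖ * ‖z‖ - 2 ≤ ‖ttm c z‖ := by
  unfold ttm
  split_ifs with h
  · rw [norm_mul]; linarith
  · have h1 : ‖(starRingEnd ℂ) (c * z)‖ = ‖c * z‖ :=
      Complex.norm_conj _
    have h2 : ‖(starRingEnd ℂ) (c * z)‖ - ‖2 * Complex.I‖
        ≤ ‖(starRingEnd ℂ) (c * z) - 2 * Complex.I‖ := by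
      have := norm_sub_norm_le ((starRingEnd ℂ) (c * z)) (2 * Complex.I)
      exact this
    have h3 : ‖2 * Complex.I‖ = 2 := by
      simp
    rw [h1, h3, norm_mul] at h2
    linarith

lemma ttm_mapsTo (c : ℂ) : Set.MapsTo (ttm c) (ttmK c) (ttmK c) := by
  intro z hz
  have hz' : Bornology.IsBounded (Set.range fun n : ℕ => (ttm c)^[n] z) := hz
  show Bornology.IsBounded (Set.range fun n : ℕ => (ttm c)^[n] (ttm c z))
  refine hz'.subset ?_
  rintro - ⟨n, rfl⟩
  exact ⟨n + 1, (Function.iterate_succ_apply (ttm c) n z).symm⟩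

/-- Points of the filled Julia set are bounded by `R = 2/(|c|-1)`. -/
lemma ttmK_subset_closedBall (c : ℂ) (h : 1 < ‖c‖) :
    ttmK c ⊆ Metric.closedBall 0 (2 / (‖c‖ - 1)) := by
  set r := ‖c‖ with hr
  have hr1 : 0 < r - 1 := by linarith
  obtain ⟨R, hR⟩ : ∃ R : ℝ, R = 2 / (r - 1) := ⟨_, rfl⟩
  have hRr : r * R - 2 = R := by
    have h2 : R * (r - 1) = 2 := by rw [hR]; exact div_mul_cancel₀ 2 hr1.ne'
    linear_combination h2
  intro z hz
  simp only [Metric.mem_closedBall, dist_zero_right]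
  rw [← hR]
  by_contra hcon
  push_neg at hcon
  have key : ∀ n : ℕ, r ^ n * (‖z‖ - R) + R ≤ ‖(ttm c)^[n] z‖ := by
    intro n
    induction n with
    | zero => simp
    | succ n ih =>
      rw [Function.iterate_succ_apply']
      have h1 := ttm_abs_ge c ((ttm c)^[n] z)
      have h2 : r * (r ^ n * (‖z‖ - R) + R) - 2
          ≤ r * ‖(ttm c)^[n] z‖ - 2 := by
        nlinarith
      calc r ^ (n + 1) * (‖z‖ - R) + R
          = r * (r ^ n * (‖z‖ - R) + R) - 2 := by linear_combination -hRr
        _ ≤ r * ‖(ttm c)^[n] z‖ - 2 := h2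
        _ ≤ ‖ttm c ((ttm c)^[n] z)‖ := h1
  have hz' : Bornology.IsBounded (Set.range fun n : ℕ => (ttm c)^[n] z) := hz
  obtain ⟨M, hM⟩ := isBounded_iff_forall_norm_le.1 hz'
  have hM' : ∀ n : ℕ, r ^ n * (‖z‖ - R) + R ≤ M := by
    intro n
    exact (key n).trans (hM _ ⟨n, rfl⟩)
  have hzR : 0 < ‖z‖ - R := by linarith
  have htend : Filter.Tendsto (fun n : ℕ => r ^ n) Filter.atTop Filter.atTop :=
    tendsto_pow_atTop_atTop_of_one_lt h
  obtain ⟨n, hn⟩ := (htend.eventually_ge_atTop ((M - R) / (‖z‖ - R) + 1)).exists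
  have := hM' n
  have h4 : r ^ n ≤ (M - R) / (‖z‖ - R) := by
    rw [le_div_iff₀ hzR]; linarith
  linarith

/-- Exact scaling of distance under one step if the points fold the same way. -/
lemma ttm_dist_eq (c : ℂ) {z w : ℂ}
    (hzw : (-1 ≤ (c * z).im ↔ -1 ≤ (c * w).im)) :
    dist (ttm c z) (ttm c w) = ‖c‖ * dist z w := by
  unfold ttm
  by_cases hz : -1 ≤ (c * z).im
  · have hw : -1 ≤ (c * w).im := hzw.1 hz
    rw [if_pos hz, if_pos hw, Complex.dist_eq, ← mul_sub, norm_mul]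
    rw [Complex.dist_eq]
  · have hw : ¬ -1 ≤ (c * w).im := fun hw => hz (hzw.2 hw)
    rw [if_neg hz, if_neg hw, dist_sub_right, Complex.dist_eq, ← map_sub, ← mul_sub]
    rw [Complex.norm_conj, norm_mul, Complex.dist_eq]

/-- Iterated exact scaling for points with the same itinerary. -/
lemma ttm_dist_iterate (c : ℂ) (n : ℕ) {z w : ℂ}
    (hzw : ∀ k < n, (-1 ≤ (c * ((ttm c)^[k] z)).im ↔ -1 ≤ (c * ((ttm c)^[k] w)).im)) :
    dist ((ttm c)^[n] z) ((ttm c)^[n] w) = ‖c‖ ^ n * dist z w := by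
  induction n with
  | zero => simp
  | succ n ih =>
    rw [Function.iterate_succ_apply', Function.iterate_succ_apply',
      ttm_dist_eq c (hzw n (Nat.lt_succ_self n)),
      ih (fun k hk => hzw k (hk.trans (Nat.lt_succ_self n)))]
    ring

/-- Generic encoding lemma: a finite-valued encoding whose fibers (within `F`) lie in
dynamical balls bounds `coverMincard`. -/
lemma coverMincard_le_of_encoding {X : Type*} (T : X → X) (F : Set X) (U : Set (X × X))
    (n : ℕ) {A : Type*} [Fintype A] (e : X → A)
    (he : ∀ z ∈ F, ∀ w ∈ F, e z = e w → w ∈ ball z (dynEntourage T U n)) :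
    coverMincard T F U n ≤ (Fintype.card A : ℕ∞) := by
  classical
  rcases F.eq_empty_or_nonempty with rfl | hF
  · simp
  obtain ⟨x₀, hx₀⟩ := hF
  set rep : A → X := fun a => if h : ∃ z, z ∈ F ∧ e z = a then h.choose else x₀ with hrep
  have hcover : IsDynCoverOf T F U n (Finset.image rep Finset.univ : Finset X) := by
    intro z hz
    have hex : ∃ w, w ∈ F ∧ e w = e z := ⟨z, hz, rfl⟩
    have hmem : rep (e z) ∈ F ∧ e (rep (e z)) = e z := by
      rw [hrep]; simp only [dif_pos hex]; exact hex.choose_spec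
    refine ⟨rep (e z), ?_, ?_⟩
    · simp only [Finset.coe_image, Finset.coe_univ, Set.image_univ]
      exact Set.mem_range_self _
    · exact he _ hz _ hmem.1 hmem.2.symm
  calc coverMincard T F U n ≤ ((Finset.image rep Finset.univ).card : ℕ∞) :=
        hcover.coverMincard_le_card
    _ ≤ (Fintype.card A : ℕ∞) := by
        exact_mod_cast (Finset.card_image_le.trans (le_of_eq Finset.card_univ))

theorem ttm_entropy_le_log_two (c : ℂ) (h : 1 < ‖c‖) :
    Dynamics.coverEntropy (ttm c) (ttmK c) ≤ (Real.log 2 : EReal) := by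
  classical
  set r := ‖c‖ with hr
  set R := 2 / (r - 1) with hR
  set T := ttm c with hT
  set K := ttmK c with hK
  rw [coverEntropy_eq_iSup_basis Metric.uniformity_basis_dist T K]
  refine iSup₂_le fun ε hε => ?_
  -- Get a finite (ε/4)-net of the ball of radius R.
  have hR0 : 0 < R := by
    rw [hR]; exact div_pos (by norm_num) (by linarith)
  obtain ⟨t, -, htfin, htcov⟩ :=
    (isCompact_closedBall (0 : ℂ) R).finite_cover_balls (show 0 < ε / 4 by linarith)
  have ht0 : (0 : ℂ) ∈ ⋃ x ∈ t, Metric.ball x (ε / 4) :=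
    htcov (by simp [hR0.le])
  obtain ⟨y₀, hy₀t, -⟩ := Set.mem_iUnion₂.1 ht0
  haveI : Fintype t := htfin.fintype
  set C : ℕ := Fintype.card t with hC
  -- The key cardinality bound.
  have key : ∀ m : ℕ, coverMincard T K {p : ℂ × ℂ | dist p.1 p.2 < ε} (m + 1)
      ≤ ((C * 2 ^ m : ℕ) : ℕ∞) := by
    intro m
    -- encoding
    set e : ℂ → (Fin m → Bool) × t := fun z =>
      (fun k => decide (-1 ≤ (c * (T^[(k : ℕ)] z)).im),
        if h' : ∃ y, y ∈ t ∧ dist (T^[m] z) y < ε / 4 then ⟨h'.choose, h'.choose_spec.1⟩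
        else ⟨y₀, hy₀t⟩) with he
    have hKb : ∀ z ∈ K, ∀ j : ℕ, ‖T^[j] z‖ ≤ R := by
      intro z hz j
      have : T^[j] z ∈ K := by
        induction j with
        | zero => exact hz
        | succ j ih => rw [Function.iterate_succ_apply']; exact ttm_mapsTo c ih
      have := ttmK_subset_closedBall c h this
      simpa [Complex.dist_eq] using this
    have hdist : ∀ z ∈ K, dist (T^[m] z) ((e z).2 : ℂ) < ε / 4 := by
      intro z hz
      have hball : T^[m] z ∈ ⋃ x ∈ t, Metric.ball x (ε / 4) := by
        apply htcov
        simp only [Metric.mem_closedBall, dist_zero_right]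
        exact hKb z hz m
      obtain ⟨y, hyt, hy⟩ := Set.mem_iUnion₂.1 hball
      have hex : ∃ y, y ∈ t ∧ dist (T^[m] z) y < ε / 4 := ⟨y, hyt, by
        simpa using hy⟩
      simp only [he, dif_pos hex]
      exact hex.choose_spec.2
    have hfib : ∀ z ∈ K, ∀ w ∈ K, e z = e w →
        w ∈ ball z (dynEntourage T {p : ℂ × ℂ | dist p.1 p.2 < ε} (m + 1)) := by
      intro z hz w hw hew
      have hbits : ∀ k < m, (-1 ≤ (c * (T^[k] z)).im ↔ -1 ≤ (c * (T^[k] w)).im) := by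
        intro k hk
        have hb := congrFun (congrArg Prod.fst hew) (⟨k, hk⟩ : Fin m)
        simp only [he] at hb
        exact decide_eq_decide.1 hb
      have hm : dist (T^[m] z) (T^[m] w) < ε / 2 := by
        have h1 := hdist z hz
        have h2 := hdist w hw
        have : (e z).2 = (e w).2 := by rw [hew]
        calc dist (T^[m] z) (T^[m] w)
            ≤ dist (T^[m] z) ((e z).2 : ℂ) + dist (T^[m] w) ((e w).2 : ℂ) := by
              rw [this]; exact dist_triangle_right _ _ _
          _ < ε / 4 + ε / 4 := add_lt_add h1 h2
          _ = ε / 2 := by ring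
      have hscale := ttm_dist_iterate c m hbits
      rw [mem_ball_dynEntourage]
      intro k hk
      have hk' : k ≤ m := Nat.lt_succ_iff.1 hk
      have hsk := ttm_dist_iterate c k (fun j hj => hbits j (hj.trans_le hk'))
      have hd0 : 0 ≤ dist z w := dist_nonneg
      have hrk : r ^ k * dist z w ≤ r ^ m * dist z w :=
        mul_le_mul_of_nonneg_right (pow_le_pow_right₀ (le_of_lt h) hk') hd0
      have : dist (T^[k] z) (T^[k] w) < ε := by
        rw [hsk]
        calc r ^ k * dist z w ≤ r ^ m * dist z w := hrk
          _ = dist (T^[m] z) (T^[m] w) := hscale.symm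
          _ < ε / 2 := hm
          _ < ε := by linarith
      simpa [ball] using this
    have := coverMincard_le_of_encoding T K {p : ℂ × ℂ | dist p.1 p.2 < ε} (m + 1) e hfib
    refine this.trans ?_
    have : Fintype.card ((Fin m → Bool) × t) = 2 ^ m * C := by
      rw [Fintype.card_prod]
      congr 1
      rw [Fintype.card_fun]
      simp
    rw [this]
    norm_cast
    ring_nf
    exact le_refl _
  -- From the cardinality bound to the entropy bound.
  have hC1 : 1 ≤ C := Fintype.card_pos_iff.2 ⟨⟨y₀, hy₀t⟩⟩
  set U : Set (ℂ × ℂ) := {p : ℂ × ℂ | dist p.1 p.2 < ε} with hU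
  have hlogC_bot : log ((C : ℝ≥0∞)) ≠ ⊥ := by
    simp only [ne_eq, log_eq_bot_iff]
    exact_mod_cast Nat.one_le_iff_ne_zero.1 hC1
  have hlogC_top : log ((C : ℝ≥0∞)) ≠ ⊤ := by
    simp only [ne_eq, log_eq_top_iff]
    exact natCast_ne_top C
  have hbound : ∀ᶠ n : ℕ in atTop,
      log (coverMincard T K U n) / (n : ℕ) ≤
        (fun n : ℕ => log ((C : ℝ≥0∞)) / (n : ℕ) + (Real.log 2 : EReal)) n := by
    filter_upwards [eventually_ge_atTop 1] with n hn
    obtain ⟨m, rfl⟩ := Nat.exists_eq_add_of_le hn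
    have h1 : coverMincard T K U (1 + m) ≤ ((C * 2 ^ m : ℕ) : ℕ∞) := by
      rw [add_comm 1 m]; exact key m
    have h2 : log (coverMincard T K U (1 + m)) ≤
        log ((C : ℝ≥0∞) * (2 : ℝ≥0∞) ^ (1 + m)) := by
      apply log_monotone
      calc ((coverMincard T K U (1 + m) : ℕ∞) : ℝ≥0∞)
          ≤ (((C * 2 ^ m : ℕ) : ℕ∞) : ℝ≥0∞) := by exact_mod_cast h1
        _ ≤ (C : ℝ≥0∞) * (2 : ℝ≥0∞) ^ (1 + m) := by
            push_cast
            rw [pow_add, pow_one]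
            apply mul_le_mul_right
            nth_rw 1 [← one_mul ((2 : ℝ≥0∞) ^ m)]
            exact mul_le_mul_left one_le_two _
    have hlog2 : log ((2 : ℝ≥0∞)) = (Real.log 2 : EReal) := by
      rw [show (2 : ℝ≥0∞) = ENNReal.ofReal 2 by norm_num, log_ofReal_of_pos (by norm_num)]
    have h3 : log ((C : ℝ≥0∞) * (2 : ℝ≥0∞) ^ (1 + m))
        = log ((C : ℝ≥0∞)) + ((1 + m : ℕ) : EReal) * (Real.log 2 : EReal) := by
      rw [log_mul_add, log_pow, hlog2]
    have hn0 : (0 : EReal) < ((1 + m : ℕ) : EReal) := by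
      exact_mod_cast Nat.cast_pos'.2 (Nat.succ_le_iff.1 hn)
    have hntop : ((1 + m : ℕ) : EReal) ≠ ⊤ := natCast_ne_top _
    have hlogC0 : (0 : EReal) ≤ log ((C : ℝ≥0∞)) := by
      rw [zero_le_log_iff]; exact_mod_cast hC1
    have hlog20 : (0 : EReal) ≤ (Real.log 2 : EReal) := by
      exact_mod_cast Real.log_nonneg one_le_two
    have h4 : log (coverMincard T K U (1 + m)) / ((1 + m : ℕ) : EReal)
        ≤ (log ((C : ℝ≥0∞)) + ((1 + m : ℕ) : EReal) * (Real.log 2 : EReal))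
          / ((1 + m : ℕ) : EReal) := by
      apply div_le_div_right_of_nonneg hn0.le
      rw [← h3]; exact h2
    have h5 : (log ((C : ℝ≥0∞)) + ((1 + m : ℕ) : EReal) * (Real.log 2 : EReal))
          / ((1 + m : ℕ) : EReal)
        = log ((C : ℝ≥0∞)) / ((1 + m : ℕ) : EReal) + (Real.log 2 : EReal) := by
      rw [div_right_distrib_of_nonneg hlogC0
        (mul_nonneg hn0.le hlog20)]
      congr 1
      rw [mul_comm ((1 + m : ℕ) : EReal) (Real.log 2 : EReal), ← EReal.mul_div,
        EReal.div_self (ne_bot_of_gt hn0) hntop hn0.ne', mul_one]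
    calc log (coverMincard T K U (1 + m)) / ((1 + m : ℕ) : EReal)
        ≤ _ := h4
      _ = _ := h5
  have hv : atTop.limsup (fun n : ℕ => log ((C : ℝ≥0∞)) / (n : ℕ)) = 0 :=
    Filter.Tendsto.limsup_eq (EReal.tendsto_const_div_atTop_nhds_zero_nat hlogC_bot hlogC_top)
  have hsum : atTop.limsup (fun n : ℕ => log ((C : ℝ≥0∞)) / (n : ℕ) + (Real.log 2 : EReal))
      ≤ (Real.log 2 : EReal) := by
    have := @EReal.limsup_add_le ℕ atTop (fun n : ℕ => log ((C : ℝ≥0∞)) / (n : ℕ))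
      (fun _ : ℕ => (Real.log 2 : EReal)) ?_ ?_
    · refine this.trans ?_
      rw [hv, limsup_const, zero_add]
    · rw [hv]; exact Or.inl EReal.zero_ne_bot
    · rw [hv]; exact Or.inl EReal.zero_ne_top
  calc coverEntropyEntourage T K U
      = atTop.limsup fun n : ℕ => log (coverMincard T K U n) / (n : ℕ) := rfl
    _ ≤ atTop.limsup (fun n : ℕ => log ((C : ℝ≥0∞)) / (n : ℕ) + (Real.log 2 : EReal)) :=
        limsup_le_limsup hbound
    _ ≤ (Real.log 2 : EReal) := hsum
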